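/- Let c₁, c₂ > 0 and define Φ̃ : 𝕋² → ℂ by Φ̃(w₁, w₂) = c₁(1 − w₁) + c₂(1 − w₂). Then there exist constants C > 0 and σ₀ > 0 such that for every 0 < σ < σ₀ and every t ∈ ℝ, (m × m)({(w₁, w₂) ∈ 𝕋² : σ/2 ≤ Re Φ̃(w₁,w₂) ≤ 2σ and |Im Φ̃(w₁,w₂) − t| ≤ σ}) ≤ C · σ^{3/2}, where m is normalized Haar measure on the unit circle 𝕋. -/

import Mathlib

/-
Writing `θ = (x, y)`, the real part of `Φ̃` is `c₁ (1 - cos x) + c₂ (1 - cos y)`, a sum of two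
nonnegative terms, so both are at most `2σ`; since `1 - cos x ≥ 2x²/π²`, both angles lie within
`O(√σ)` of `0` modulo `2π`. This confines `x` to a set of measure `O(√σ)`. For fixed `x`, the
imaginary part `-(c₁ sin x + c₂ sin y)` pins `c₂ sin y` to an interval of length `2σ`; near `0`
the sine has slope at least `1/2`, so `y` ranges over a set of measure `O(σ)`. Fubini gives
`O(σ^{3/2})`.
-/

open MeasureTheory Real Set

namespace MeasureTheory.Measure

variable {α β : Type*} [MeasurableSpace α] [MeasurableSpace β] {μ : Measure α} {ν : Measure β}

lemma prod_apply_le_mul_of_slice_le {s : Set (α × β)} (hs : MeasurableSet s) {A : Set α}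
    (hA : ∀ p ∈ s, p.1 ∈ A) {b : ENNReal} (hb : ∀ x ∈ A, ν (Prod.mk x ⁻¹' s) ≤ b) :
    μ.prod ν s ≤ b * μ A := by
  have hslice : ∀ x, ν (Prod.mk x ⁻¹' s) ≤ A.indicator (fun _ ↦ b) x := by
    intro x
    by_cases hx : x ∈ A
    · simpa [hx] using hb x hx
    · have hempty : Prod.mk x ⁻¹' s = ∅ := eq_empty_of_forall_notMem fun y hy ↦ hx (hA _ hy)
      simp [hempty]
  calc μ.prod ν s ≤ ∫⁻ x, ν (Prod.mk x ⁻¹' s) ∂μ := prod_apply_le hs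
    _ ≤ ∫⁻ x, A.indicator (fun _ ↦ b) x ∂μ := lintegral_mono hslice
    _ ≤ b * μ A := lintegral_indicator_const_le A b

end MeasureTheory.Measure

lemma Real.volume_setOf_mem_Icc_le_of_mul_sub_le {s : Set ℝ} {f : ℝ → ℝ} {k : ℝ} (hk : 0 < k)
    (hf : ∀ x ∈ s, ∀ y ∈ s, x ≤ y → k * (y - x) ≤ f y - f x) (a b : ℝ) :
    volume {x ∈ s | f x ∈ Icc a b} ≤ ENNReal.ofReal ((b - a) / k) := by
  have hdist : ∀ x ∈ {x ∈ s | f x ∈ Icc a b}, ∀ y ∈ {x ∈ s | f x ∈ Icc a b}, x ≤ y →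
      dist x y ≤ (b - a) / k := by
    rintro x ⟨hx, hxa, hxb⟩ y ⟨hy, hya, hyb⟩ hxy
    rw [dist_comm, dist_eq, abs_of_nonneg (sub_nonneg.2 hxy), le_div_iff₀ hk]
    linarith [hf x hx y hy hxy]
  refine (volume_le_diam _).trans (Metric.ediam_le_of_forall_dist_le fun x hx y hy ↦ ?_)
  rcases le_total x y with hxy | hyx
  · exact hdist x hx y hy hxy
  · exact dist_comm x y ▸ hdist y hy x hx hyx

lemma Real.mul_sub_le_sin_sub_sin {D : Set ℝ} (hD : Convex ℝ D) {k : ℝ}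
    (hcos : ∀ x ∈ D, k ≤ cos x) : ∀ x ∈ D, ∀ y ∈ D, x ≤ y → k * (y - x) ≤ sin y - sin x :=
  hD.mul_sub_le_image_sub_of_le_deriv continuousOn_sin differentiable_sin.differentiableOn
    fun x hx ↦ deriv_sin ▸ hcos x (interior_subset hx)

lemma Real.half_le_cos_of_abs_le {x : ℝ} (hx : |x| ≤ π / 3) : 1 / 2 ≤ cos x := by
  rw [← cos_abs, ← cos_pi_div_three]
  exact cos_le_cos_of_nonneg_of_le_pi (abs_nonneg x) (by linarith [pi_pos]) hx

lemma Real.abs_le_of_mul_one_sub_cos_le {c σ x : ℝ} (hc : 0 < c) (hx : |x| ≤ π)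
    (h : c * (1 - cos x) ≤ 2 * σ) : |x| ≤ π * √(σ / c) := by
  have hquad : c * (2 / π ^ 2 * x ^ 2) ≤ 2 * σ :=
    le_trans (by gcongr; linarith [cos_le_one_sub_mul_cos_sq hx]) h
  have hsq : x ^ 2 ≤ π ^ 2 * (σ / c) := by
    rw [mul_div_assoc', le_div_iff₀ hc]
    field_simp at hquad
    linarith
  calc |x| ≤ √(π ^ 2 * (σ / c)) := abs_le_sqrt hsq
    _ = π * √(σ / c) := by rw [sqrt_mul (sq_nonneg π), sqrt_sq pi_pos.le]

lemma Real.mem_Icc_union_Icc_of_mul_one_sub_cos_le {c σ x : ℝ} (hc : 0 < c)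
    (hx : x ∈ Ico 0 (2 * π)) (h : c * (1 - cos x) ≤ 2 * σ) :
    x ∈ Icc 0 (π * √(σ / c)) ∪ Icc (2 * π - π * √(σ / c)) (2 * π) := by
  rcases le_or_gt x π with hxπ | hxπ
  · have := abs_le_of_mul_one_sub_cos_le hc (abs_le.2 ⟨by linarith [pi_pos, hx.1], hxπ⟩) h
    exact Or.inl ⟨hx.1, (le_abs_self x).trans this⟩
  · have := abs_le_of_mul_one_sub_cos_le (x := x - 2 * π) hc
      (abs_le.2 ⟨by linarith, by linarith [hx.2]⟩) (by rwa [cos_sub_two_pi])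
    exact Or.inr ⟨by linarith [neg_abs_le (x - 2 * π)], hx.2.le⟩

lemma Real.volume_setOf_mul_one_sub_cos_le {c σ : ℝ} (hc : 0 < c) :
    volume {x ∈ Ico 0 (2 * π) | c * (1 - cos x) ≤ 2 * σ} ≤ ENNReal.ofReal (2 * π * √(σ / c)) :=
  calc volume {x ∈ Ico 0 (2 * π) | c * (1 - cos x) ≤ 2 * σ}
      ≤ volume (Icc 0 (π * √(σ / c)) ∪ Icc (2 * π - π * √(σ / c)) (2 * π)) :=
        measure_mono fun x hx ↦ mem_Icc_union_Icc_of_mul_one_sub_cos_le hc hx.1 hx.2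
    _ ≤ volume (Icc 0 (π * √(σ / c))) + volume (Icc (2 * π - π * √(σ / c)) (2 * π)) :=
        measure_union_le _ _
    _ = ENNReal.ofReal (2 * π * √(σ / c)) := by
        rw [volume_Icc, volume_Icc, sub_zero, sub_sub_cancel,
          ← ENNReal.ofReal_add (by positivity) (by positivity)]
        ring_nf

lemma Real.volume_setOf_mul_sin_mem_Icc_le {D : Set ℝ} (hD : Convex ℝ D)
    (hcos : ∀ x ∈ D, 1 / 2 ≤ cos x) {c : ℝ} (hc : 0 < c) (a b : ℝ) :
    volume {x ∈ D | c * sin x ∈ Icc a b} ≤ ENNReal.ofReal (2 * (b - a) / c) := by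
  have hslope : ∀ x ∈ D, ∀ y ∈ D, x ≤ y → c / 2 * (y - x) ≤ c * sin y - c * sin x := by
    intro x hx y hy hxy
    have := mul_le_mul_of_nonneg_left (mul_sub_le_sin_sub_sin hD hcos x hx y hy hxy) hc.le
    linarith
  convert volume_setOf_mem_Icc_le_of_mul_sub_le (half_pos hc) hslope a b using 2
  field_simp

lemma Real.volume_setOf_mul_one_sub_cos_le_and_abs_mul_sin_sub_le {c σ : ℝ} (hc : 0 < c)
    (hσ : 0 ≤ σ) (hσc : 9 * σ ≤ c) (r : ℝ) :
    volume {y ∈ Ico 0 (2 * π) | c * (1 - cos y) ≤ 2 * σ ∧ |c * sin y - r| ≤ σ} ≤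
      ENNReal.ofReal (8 * σ / c) := by
  have hδ : π * √(σ / c) ≤ π / 3 := by
    have : √(σ / c) ≤ 1 / 3 := sqrt_le_iff.2 ⟨by norm_num, by rw [div_le_iff₀ hc]; linarith⟩
    nlinarith [pi_pos]
  have hcos₁ : ∀ x ∈ Icc 0 (π / 3), 1 / 2 ≤ cos x := fun x hx ↦
    half_le_cos_of_abs_le (abs_le.2 ⟨by linarith [pi_pos, hx.1], hx.2⟩)
  have hcos₂ : ∀ x ∈ Icc (5 * π / 3) (2 * π), 1 / 2 ≤ cos x := fun x hx ↦
    cos_sub_two_pi x ▸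
      half_le_cos_of_abs_le (abs_le.2 ⟨by linarith [hx.1], by linarith [hx.2, pi_pos]⟩)
  have hsub : {y ∈ Ico 0 (2 * π) | c * (1 - cos y) ≤ 2 * σ ∧ |c * sin y - r| ≤ σ} ⊆
      {y ∈ Icc 0 (π / 3) | c * sin y ∈ Icc (r - σ) (r + σ)} ∪
        {y ∈ Icc (5 * π / 3) (2 * π) | c * sin y ∈ Icc (r - σ) (r + σ)} := by
    rintro y ⟨hy, hcos, hsin⟩
    have hsin' : c * sin y ∈ Icc (r - σ) (r + σ) := by
      obtain ⟨h₁, h₂⟩ := abs_sub_le_iff.1 hsin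
      constructor <;> linarith
    rcases mem_Icc_union_Icc_of_mul_one_sub_cos_le hc hy hcos with ⟨hy₀, hyδ⟩ | ⟨hyδ, hy₂⟩
    · exact Or.inl ⟨⟨hy₀, hyδ.trans hδ⟩, hsin'⟩
    · exact Or.inr ⟨⟨by linarith, hy₂⟩, hsin'⟩
  have hpiece : ∀ D : Set ℝ, Convex ℝ D → (∀ x ∈ D, 1 / 2 ≤ cos x) →
      volume {y ∈ D | c * sin y ∈ Icc (r - σ) (r + σ)} ≤ ENNReal.ofReal (4 * σ / c) := by
    intro D hD hcos
    convert volume_setOf_mul_sin_mem_Icc_le hD hcos hc (r - σ) (r + σ) using 2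
    ring
  calc _ ≤ _ := measure_mono hsub
    _ ≤ _ := measure_union_le _ _
    _ ≤ ENNReal.ofReal (4 * σ / c) + ENNReal.ofReal (4 * σ / c) :=
        add_le_add (hpiece _ (convex_Icc _ _) hcos₁) (hpiece _ (convex_Icc _ _) hcos₂)
    _ = ENNReal.ofReal (8 * σ / c) := by
        rw [← ENNReal.ofReal_add (by positivity) (by positivity)]
        ring_nf

lemma Complex.re_ofReal_mul_one_sub_exp_I_mul (c θ : ℝ) :
    ((c : ℂ) * (1 - exp (I * θ))).re = c * (1 - Real.cos θ) := by
  simp [mul_comm I, exp_ofReal_mul_I_re]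

lemma Complex.im_ofReal_mul_one_sub_exp_I_mul (c θ : ℝ) :
    ((c : ℂ) * (1 - exp (I * θ))).im = -(c * Real.sin θ) := by
  simp [mul_comm I, exp_ofReal_mul_I_im]

lemma Real.mul_one_sub_cos_le_of_add_le {c₁ c₂ x y s : ℝ} (hc₁ : 0 ≤ c₁) (hc₂ : 0 ≤ c₂)
    (h : c₁ * (1 - cos x) + c₂ * (1 - cos y) ≤ s) :
    c₁ * (1 - cos x) ≤ s ∧ c₂ * (1 - cos y) ≤ s := by
  have h₁ := mul_nonneg hc₁ (sub_nonneg.2 (cos_le_one x))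
  have h₂ := mul_nonneg hc₂ (sub_nonneg.2 (cos_le_one y))
  constructor <;> linarith

theorem stmt17 (c₁ c₂ : ℝ) (hc₁ : 0 < c₁) (hc₂ : 0 < c₂) :
    ∃ C σ₀ : ℝ, 0 < C ∧ 0 < σ₀ ∧ ∀ σ : ℝ, 0 < σ → σ < σ₀ → ∀ t : ℝ,
      volume {θ : ℝ × ℝ | θ.1 ∈ Set.Ico 0 (2 * Real.pi) ∧ θ.2 ∈ Set.Ico 0 (2 * Real.pi) ∧
          σ / 2 ≤ ((c₁ : ℂ) * (1 - Complex.exp (Complex.I * (θ.1 : ℂ))) +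
            (c₂ : ℂ) * (1 - Complex.exp (Complex.I * (θ.2 : ℂ)))).re ∧
          ((c₁ : ℂ) * (1 - Complex.exp (Complex.I * (θ.1 : ℂ))) +
            (c₂ : ℂ) * (1 - Complex.exp (Complex.I * (θ.2 : ℂ)))).re ≤ 2 * σ ∧
          |((c₁ : ℂ) * (1 - Complex.exp (Complex.I * (θ.1 : ℂ))) +
            (c₂ : ℂ) * (1 - Complex.exp (Complex.I * (θ.2 : ℂ)))).im - t| ≤ σ} ≤
        ENNReal.ofReal (C * σ ^ ((3 : ℝ) / 2)) := by
  refine ⟨16 * π / (√c₁ * c₂), c₂ / 9, by positivity, by positivity, fun σ hσ hσ₀ t ↦ ?_⟩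
  set A := {x ∈ Ico 0 (2 * π) | c₁ * (1 - cos x) ≤ 2 * σ}
  set T := {p : ℝ × ℝ | p.1 ∈ A ∧ p.2 ∈ Ico 0 (2 * π) ∧ c₂ * (1 - cos p.2) ≤ 2 * σ ∧
    |c₂ * sin p.2 - -(c₁ * sin p.1 + t)| ≤ σ}
  refine (measure_mono (t := T) ?_).trans ?_
  · rintro ⟨x, y⟩ ⟨hx, hy, -, hre, him⟩
    simp only [Complex.add_re, Complex.add_im, Complex.re_ofReal_mul_one_sub_exp_I_mul,
      Complex.im_ofReal_mul_one_sub_exp_I_mul] at hre him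
    obtain ⟨hre₁, hre₂⟩ := mul_one_sub_cos_le_of_add_le hc₁.le hc₂.le hre
    exact ⟨⟨hx, hre₁⟩, hy, hre₂, by rwa [← abs_neg, show -(c₂ * sin y - -(c₁ * sin x + t)) =
      -(c₁ * sin x) + -(c₂ * sin y) - t by ring]⟩
  calc volume T ≤ ENNReal.ofReal (8 * σ / c₂) * volume A :=
        Measure.prod_apply_le_mul_of_slice_le (by measurability) (fun _ hp ↦ hp.1) fun x _ ↦
          measure_mono (fun y hy ↦ hy.2) |>.trans
            (volume_setOf_mul_one_sub_cos_le_and_abs_mul_sin_sub_le hc₂ hσ.le (by linarith)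
              (-(c₁ * sin x + t)))
    _ ≤ ENNReal.ofReal (8 * σ / c₂) * ENNReal.ofReal (2 * π * √(σ / c₁)) :=
        mul_le_mul_right (volume_setOf_mul_one_sub_cos_le hc₁) _
    _ = ENNReal.ofReal (16 * π / (√c₁ * c₂) * σ ^ ((3 : ℝ) / 2)) := by
        rw [← ENNReal.ofReal_mul (by positivity), sqrt_div hσ.le,
          show (3 : ℝ) / 2 = 1 + 1 / 2 by norm_num, rpow_add hσ, rpow_one, ← sqrt_eq_rpow]
        congr 1
        field_simp
        norm_num
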